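/- arXiv:cs/0002008 — 5 statements merged into one kernel-verified Lean document; each statement's English description precedes it below -/
import Mathlib

section
/- Let S : X → Y and T : Y → Z be automata with boundary and let (v₀,w₀) be a state of the binding S·T. Then behaviours of S·T from (v₀,w₀) correspond bijectively to pairs consisting of a behaviour γ of S from v₀ and a behaviour δ of T from w₀ of the same length and with the same appearance on the common boundary Y; under this correspondence the k-th motion of the behaviour of S·T is the pair of the k-th motions of γ and δ. -/
/-- An automaton with boundary `S : X → Y`, where the action sets `X`, `Y`
have trivial (reflexive) actions `eX`, `eY`. -/
structure Aut (X Y : Type) (eX : X) (eY : Y) where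
  State : Type
  Motion : Type
  src : Motion → State
  tgt : Motion → State
  refl : State → Motion
  refl_src : ∀ v, src (refl v) = v
  refl_tgt : ∀ v, tgt (refl v) = v
  labL : Motion → X
  labR : Motion → Y
  labL_refl : ∀ v, labL (refl v) = eX
  labR_refl : ∀ v, labR (refl v) = eY

namespace Aut

variable {X Y Z W : Type} {eX : X} {eY : Y} {eZ : Z} {eW : W}

/-- The binding `S·T` of automata `S : X → Y` and `T : Y → Z`. -/
def bind (S : Aut X Y eX eY) (T : Aut Y Z eY eZ) : Aut X Z eX eZ where
  State := S.State × T.State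
  Motion := {p : S.Motion × T.Motion // S.labR p.1 = T.labL p.2}
  src p := (S.src p.val.1, T.src p.val.2)
  tgt p := (S.tgt p.val.1, T.tgt p.val.2)
  refl v := ⟨(S.refl v.1, T.refl v.2), by rw [S.labR_refl, T.labL_refl]⟩
  refl_src v := by simp [S.refl_src, T.refl_src]
  refl_tgt v := by simp [S.refl_tgt, T.refl_tgt]
  labL p := S.labL p.val.1
  labR p := T.labR p.val.2
  labL_refl v := S.labL_refl v.1
  labR_refl v := T.labR_refl v.2

/-- The product `S×T` of automata `S : X → Y` and `T : Z → W`. -/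
def prod (S : Aut X Y eX eY) (T : Aut Z W eZ eW) :
    Aut (X × Z) (Y × W) (eX, eZ) (eY, eW) where
  State := S.State × T.State
  Motion := S.Motion × T.Motion
  src p := (S.src p.1, T.src p.2)
  tgt p := (S.tgt p.1, T.tgt p.2)
  refl v := (S.refl v.1, T.refl v.2)
  refl_src v := by simp [S.refl_src, T.refl_src]
  refl_tgt v := by simp [S.refl_tgt, T.refl_tgt]
  labL p := (S.labL p.1, T.labL p.2)
  labR p := (S.labR p.1, T.labR p.2)
  labL_refl v := by simp [S.labL_refl, T.labL_refl]
  labR_refl v := by simp [S.labR_refl, T.labR_refl]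

/-- The feedback `fb_Y S` of an automaton `S : X×Y → Y×Z`. -/
def fb (S : Aut (X × Y) (Y × Z) (eX, eY) (eY, eZ)) : Aut X Z eX eZ where
  State := S.State
  Motion := {e : S.Motion // (S.labL e).2 = (S.labR e).1}
  src e := S.src e.val
  tgt e := S.tgt e.val
  refl v := ⟨S.refl v, by rw [S.labL_refl, S.labR_refl]⟩
  refl_src v := S.refl_src v
  refl_tgt v := S.refl_tgt v
  labL e := (S.labL e.val).1
  labR e := (S.labR e.val).2
  labL_refl v := by simp [S.labL_refl]
  labR_refl v := by simp [S.labR_refl]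

/-- The identity automaton on an action set `X`. -/
def ident (X : Type) (eX : X) : Aut X X eX eX where
  State := PUnit
  Motion := X
  src _ := PUnit.unit
  tgt _ := PUnit.unit
  refl _ := eX
  refl_src _ := rfl
  refl_tgt _ := rfl
  labL x := x
  labR x := x
  labL_refl _ := rfl
  labR_refl _ := rfl

end Aut

/-- `IsPath A v l w` : the list of motions `l` is a finite behaviour of `A`
from the state `v` ending at the state `w`. -/
def IsPath {X Y : Type} {eX : X} {eY : Y} (A : Aut X Y eX eY) :
    A.State → List A.Motion → A.State → Prop
  | v, [], w => v = w
  | v, e :: l, w => A.src e = v ∧ IsPath A (A.tgt e) l w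

/-- `w` is reachable from `v`: there is a finite (possibly empty) behaviour from `v` to `w`. -/
def Reaches {X Y : Type} {eX : X} {eY : Y} (A : Aut X Y eX eY) (v w : A.State) : Prop :=
  ∃ l, IsPath A v l w

/-- A state is a deadlock if the only motion out of it is the reflexive motion. -/
def Deadlock {X Y : Type} {eX : X} {eY : Y} (A : Aut X Y eX eY) (v : A.State) : Prop :=
  ∀ e, A.src e = v → e = A.refl v

/-- A behaviour (finite or infinite) of `A` from the state `v0`, encoded as a
finite-or-infinite sequence `Stream'.Seq` of motions. -/
def IsBehaviour {X Y : Type} {eX : X} {eY : Y} (A : Aut X Y eX eY) (v0 : A.State)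
    (s : Stream'.Seq A.Motion) : Prop :=
  (∀ e, s.get? 0 = some e → A.src e = v0) ∧
  (∀ k e f, s.get? k = some e → s.get? (k + 1) = some f → A.src f = A.tgt e)

/-- A comparison of automata: maps on states and motions preserving sources,
targets, reflexive motions and boundary labels. -/
structure Comparison {X Y : Type} {eX : X} {eY : Y} (S T : Aut X Y eX eY) where
  onState : S.State → T.State
  onMotion : S.Motion → T.Motion
  src_eq : ∀ e, T.src (onMotion e) = onState (S.src e)
  tgt_eq : ∀ e, T.tgt (onMotion e) = onState (S.tgt e)
  refl_eq : ∀ v, onMotion (S.refl v) = T.refl (onState v)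
  labL_eq : ∀ e, T.labL (onMotion e) = S.labL e
  labR_eq : ∀ e, T.labR (onMotion e) = S.labR e

/-- An isomorphism of automata: bijections on states and motions preserving sources,
targets, reflexive motions and boundary labels. -/
structure AutIso {X Y : Type} {eX : X} {eY : Y} (S T : Aut X Y eX eY) where
  stateEquiv : S.State ≃ T.State
  motionEquiv : S.Motion ≃ T.Motion
  src_eq : ∀ e, T.src (motionEquiv e) = stateEquiv (S.src e)
  tgt_eq : ∀ e, T.tgt (motionEquiv e) = stateEquiv (S.tgt e)
  refl_eq : ∀ v, motionEquiv (S.refl v) = T.refl (stateEquiv v)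
  labL_eq : ∀ e, T.labL (motionEquiv e) = S.labL e
  labR_eq : ∀ e, T.labR (motionEquiv e) = S.labR e

/-- The reachable subautomaton `r(A)` of `A` with initial state `v0`. -/
def reach {X Y : Type} {eX : X} {eY : Y} (A : Aut X Y eX eY) (v0 : A.State) :
    Aut X Y eX eY where
  State := {v : A.State // Reaches A v0 v}
  Motion := {e : A.Motion // Reaches A v0 (A.src e) ∧ Reaches A v0 (A.tgt e)}
  src e := ⟨A.src e.val, e.property.1⟩
  tgt e := ⟨A.tgt e.val, e.property.2⟩
  refl v := ⟨A.refl v.val, by rw [A.refl_src, A.refl_tgt]; exact ⟨v.property, v.property⟩⟩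
  refl_src v := Subtype.ext (A.refl_src v.val)
  refl_tgt v := Subtype.ext (A.refl_tgt v.val)
  labL e := A.labL e.val
  labR e := A.labR e.val
  labL_refl v := A.labL_refl v.val
  labR_refl v := A.labR_refl v.val

/-- The initial state of `A`, as a state of the reachable subautomaton `r(A)`. -/
def reachInit {X Y : Type} {eX : X} {eY : Y} (A : Aut X Y eX eY) (v0 : A.State) :
    (reach A v0).State :=
  ⟨v0, ⟨[], rfl⟩⟩

/-- A simulation `S ⇒ T` of automata with initial states: a comparison
`r(S) → r(T)` preserving the initial state and satisfying the lifting property. -/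
structure Simulation {X Y : Type} {eX : X} {eY : Y} (S T : Aut X Y eX eY)
    (v0 : S.State) (w0 : T.State) where
  comp : Comparison (reach S v0) (reach T w0)
  init : (comp.onState (reachInit S v0)).val = w0
  lift : ∀ (v : (reach S v0).State) (e : (reach T w0).Motion),
      (reach T w0).src e = comp.onState v →
      ∃ (l : List ((reach S v0).Motion)) (e' : (reach S v0).Motion)
        (v' : (reach S v0).State),
        IsPath (reach S v0) v (l ++ [e']) v' ∧
        (∀ m ∈ l, comp.onMotion m = (reach T w0).refl (comp.onState v)) ∧
        comp.onMotion e' = e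

/-!
A motion of `S·T` is a pair of motions of `S` and `T` agreeing on `Y`, so a sequence of such
motions is the same thing as two sequences of equal length whose appearances on `Y` agree
(zip and unzip). The source and target of a motion of `S·T` are computed componentwise, so
the chaining conditions of a behaviour of `S·T` split into those of its two components.
-/

namespace Stream'.Seq

variable {α β γ : Type*}

def attachOf {P : α → Prop} (s : Seq α) (h : ∀ n a, s.get? n = some a → P a) :
    Seq (Subtype P) :=
  ⟨fun n => (s.get? n).pmap Subtype.mk (h n), fun {n} hn => by
    rw [Option.pmap_eq_none_iff] at hn ⊢
    exact s.2 hn⟩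

theorem get?_attachOf {P : α → Prop} (s : Seq α) (h : ∀ n a, s.get? n = some a → P a)
    (n : ℕ) : (s.attachOf h).get? n = (s.get? n).pmap Subtype.mk (h n) :=
  rfl

theorem map_val_attachOf {P : α → Prop} (s : Seq α) (h : ∀ n a, s.get? n = some a → P a) :
    (s.attachOf h).map Subtype.val = s := by
  ext1 n
  rw [map_get?, get?_attachOf, Option.map_pmap, Option.pmap_eq_map, Option.map_id']

theorem map_fst_zip {s : Seq α} {t : Seq β}
    (hlen : ∀ k, (s.get? k).isSome ↔ (t.get? k).isSome) : (s.zip t).map Prod.fst = s := by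
  ext1 n
  rw [map_get?, get?_zip]
  have hn := hlen n
  cases hs : s.get? n <;> cases ht : t.get? n <;> simp [hs, ht] at hn ⊢

theorem map_snd_zip {s : Seq α} {t : Seq β}
    (hlen : ∀ k, (s.get? k).isSome ↔ (t.get? k).isSome) : (s.zip t).map Prod.snd = t := by
  ext1 n
  rw [map_get?, get?_zip]
  have hn := hlen n
  cases hs : s.get? n <;> cases ht : t.get? n <;> simp [hs, ht] at hn ⊢

theorem eq_of_get?_zip_of_map_eq {f : α → γ} {g : β → γ} {s : Seq α} {t : Seq β}
    (h : s.map f = t.map g) {n : ℕ} {q : α × β} (hq : (s.zip t).get? n = some q) :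
    f q.1 = g q.2 := by
  have hn := congrArg (get? · n) h
  simp only [map_get?] at hn
  rw [get?_zip, Option.map₂_eq_some_iff] at hq
  obtain ⟨a, b, ha, hb, rfl⟩ := hq
  simp_all

def zipEquiv (f : α → γ) (g : β → γ) :
    Seq {q : α × β // f q.1 = g q.2} ≃
      {p : Seq α × Seq β //
        (∀ k, (p.1.get? k).isSome ↔ (p.2.get? k).isSome) ∧ p.1.map f = p.2.map g} where
  toFun u := ⟨(u.map (·.val.1), u.map (·.val.2)), fun k => by simp [map_get?], by
    ext1 n
    simp only [map_get?, Option.map_map]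
    cases u.get? n with
    | none => rfl
    | some q => exact congrArg some q.2⟩
  invFun p := (p.1.1.zip p.1.2).attachOf fun _ _ => eq_of_get?_zip_of_map_eq p.2.2
  left_inv u := by
    ext1 n
    cases hu : u.get? n <;> simp [get?_attachOf, get?_zip, map_get?, hu]
  right_inv := by
    rintro ⟨⟨s, t⟩, hlen, -⟩
    refine Subtype.ext (Prod.ext ?_ ?_)
    · show ((s.zip t).attachOf _).map (Prod.fst ∘ Subtype.val) = s
      rw [map_comp, map_val_attachOf, map_fst_zip hlen]
    · show ((s.zip t).attachOf _).map (Prod.snd ∘ Subtype.val) = t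
      rw [map_comp, map_val_attachOf, map_snd_zip hlen]

end Stream'.Seq

open Stream'

theorem isBehaviour_map_iff {X Y : Type} {eX : X} {eY : Y} {α : Type*} (A : Aut X Y eX eY)
    (v0 : A.State) (φ : α → A.Motion) (s : Seq α) :
    IsBehaviour A v0 (s.map φ) ↔
      (∀ a, s.get? 0 = some a → A.src (φ a) = v0) ∧
        ∀ k a b, s.get? k = some a → s.get? (k + 1) = some b → A.src (φ b) = A.tgt (φ a) := by
  simp only [IsBehaviour, Seq.map_get?, Option.map_eq_some_iff, forall_exists_index, and_imp]
  constructor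
  · exact fun ⟨h0, hstep⟩ => ⟨fun a ha => h0 _ a ha rfl,
      fun k a b ha hb => hstep k _ _ a ha rfl b hb rfl⟩
  · rintro ⟨h0, hstep⟩
    exact ⟨fun _ a ha he => he ▸ h0 a ha, fun k _ _ a ha he b hb hf => he ▸ hf ▸ hstep k a b ha hb⟩

namespace Aut

variable {X Y Z : Type} {eX : X} {eY : Y} {eZ : Z} {S : Aut X Y eX eY} {T : Aut Y Z eY eZ}

theorem bind_src_eq_iff {m : (S.bind T).Motion} {v : S.State} {w : T.State} :
    (S.bind T).src m = (v, w) ↔ S.src m.val.1 = v ∧ T.src m.val.2 = w :=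
  Prod.ext_iff

theorem bind_src_eq_tgt_iff {m m' : (S.bind T).Motion} :
    (S.bind T).src m' = (S.bind T).tgt m ↔
      S.src m'.val.1 = S.tgt m.val.1 ∧ T.src m'.val.2 = T.tgt m.val.2 :=
  Prod.ext_iff

end Aut

theorem isBehaviour_bind_iff {X Y Z : Type} {eX : X} {eY : Y} {eZ : Z}
    (S : Aut X Y eX eY) (T : Aut Y Z eY eZ) (v0 : S.State) (w0 : T.State)
    (β : Seq (S.bind T).Motion) :
    IsBehaviour (S.bind T) (v0, w0) β ↔
      IsBehaviour S v0 (β.map (·.val.1)) ∧ IsBehaviour T w0 (β.map (·.val.2)) := by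
  rw [isBehaviour_map_iff, isBehaviour_map_iff]
  simp only [IsBehaviour, Aut.bind_src_eq_iff, Aut.bind_src_eq_tgt_iff, imp_and, forall_and]
  tauto

/-- Behaviours of the binding `S·T` from `(v₀,w₀)` correspond bijectively
to pairs of behaviours of `S` from `v₀` and of `T` from `w₀` of the same length and with
the same appearance on the common boundary `Y`; the correspondence is componentwise. -/
theorem binding_behaviour_bijection {X Y Z : Type} {eX : X} {eY : Y} {eZ : Z}
    (S : Aut X Y eX eY) (T : Aut Y Z eY eZ) (v0 : S.State) (w0 : T.State) :
    ∃ Φ : {β : Stream'.Seq (S.bind T).Motion // IsBehaviour (S.bind T) (v0, w0) β} ≃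
        {p : Stream'.Seq S.Motion × Stream'.Seq T.Motion //
          IsBehaviour S v0 p.1 ∧ IsBehaviour T w0 p.2 ∧
          (∀ k, (p.1.get? k).isSome ↔ (p.2.get? k).isSome) ∧
          p.1.map S.labR = p.2.map T.labL},
      ∀ β k, ((Φ β).val.1.get? k = (β.val.get? k).map (fun m => m.val.1)) ∧
        ((Φ β).val.2.get? k = (β.val.get? k).map (fun m => m.val.2)) := by
  let unzip := Seq.zipEquiv S.labR T.labL
  refine ⟨(unzip.subtypeEquiv fun β => ?_).trans
    (Equiv.subtypeSubtypeEquivSubtype fun h => h.2.2), fun β k => ⟨?_, ?_⟩⟩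
  · exact (isBehaviour_bind_iff S T v0 w0 β).trans
      ((and_iff_left (unzip β).property).symm.trans and_assoc)
  all_goals exact Seq.map_get? _ _ _
end

section
/- For automata with boundary S : X → Y and T : Y → Z, the automata fb_Y(S×T) : X → Z and S·T : X → Z are isomorphic. -/
/-- For automata `S : X → Y` and `T : Y → Z`, the feedback of the product,
`fb_Y (S×T) : X → Z`, is isomorphic to the binding `S·T : X → Z`. -/
theorem fb_prod_iso_bind {X Y Z : Type} {eX : X} {eY : Y} {eZ : Z}
    (S : Aut X Y eX eY) (T : Aut Y Z eY eZ) :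
    Nonempty (AutIso (S.prod T).fb (S.bind T)) :=
  ⟨{ stateEquiv := Equiv.refl _
     motionEquiv := Equiv.subtypeEquivRight fun _ => eq_comm
     src_eq := fun _ => rfl
     tgt_eq := fun _ => rfl
     refl_eq := fun _ => rfl
     labL_eq := fun _ => rfl
     labR_eq := fun _ => rfl }⟩
end

section
/- Let S : X → Y and T : Z → W be automata with boundary with initial states v₀ and w₀. If the product S×T has a deadlock state reachable from (v₀,w₀), then there exist a deadlock state v* of S and a deadlock state w* of T such that (v*,w*) is a deadlock state of S×T reachable from (v₀,w₀); moreover, (v*,w*) is reachable from (v₀,w₀) by a finite behaviour which is the concatenation of a behaviour from (v₀,w₀) to (v*,w₀) all of whose motions have reflexive T-component, followed by a behaviour from (v*,w₀) to (v*,w*) all of whose motions have reflexive S-component. -/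
/-!
A motion of one factor paired with the reflexive motion of the other is a motion of `S×T`
leaving the same state, so a deadlock `(v*, w*)` of `S×T` has deadlock components. Projecting
a path `(v₀, w₀) ⇝ (v*, w*)` to the two factors gives paths `v₀ ⇝ v*` in `S` and `w₀ ⇝ w*`
in `T`; run the first with `T` idle at `w₀`, then the second with `S` idle at `v*`.
-/

section Paths

variable {X Y X' Y' : Type} {eX : X} {eY : Y} {eX' : X'} {eY' : Y'}

theorem IsPath.append {A : Aut X Y eX eY} :
    ∀ {l₁ l₂ : List A.Motion} {v u w : A.State},
      IsPath A v l₁ u → IsPath A u l₂ w → IsPath A v (l₁ ++ l₂) w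
  | [], _, _, _, _, h₁, h₂ => by cases h₁; exact h₂
  | _ :: _, _, _, _, _, h₁, h₂ => ⟨h₁.1, h₁.2.append h₂⟩

theorem IsPath.map {A : Aut X Y eX eY} {B : Aut X' Y' eX' eY'}
    (f : A.State → B.State) (g : A.Motion → B.Motion)
    (hsrc : ∀ e, B.src (g e) = f (A.src e)) (htgt : ∀ e, B.tgt (g e) = f (A.tgt e)) :
    ∀ {l : List A.Motion} {v w : A.State}, IsPath A v l w → IsPath B (f v) (l.map g) (f w)
  | [], _, _, h => by cases h; rfl
  | _ :: _, _, _, h => ⟨by rw [hsrc, h.1], by rw [htgt]; exact h.2.map f g hsrc htgt⟩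

end Paths

namespace Aut

variable {X Y Z W : Type} {eX : X} {eY : Y} {eZ : Z} {eW : W}
  {S : Aut X Y eX eY} {T : Aut Z W eZ eW}

theorem isPath_prod_fst {l : List (S.prod T).Motion} {p q : (S.prod T).State}
    (h : IsPath (S.prod T) p l q) : IsPath S p.1 (l.map Prod.fst) q.1 :=
  h.map Prod.fst Prod.fst (fun _ => rfl) (fun _ => rfl)

theorem isPath_prod_snd {l : List (S.prod T).Motion} {p q : (S.prod T).State}
    (h : IsPath (S.prod T) p l q) : IsPath T p.2 (l.map Prod.snd) q.2 :=
  h.map Prod.snd Prod.snd (fun _ => rfl) (fun _ => rfl)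

theorem isPath_prod_refl_right {l : List S.Motion} {v v' : S.State} (w : T.State)
    (h : IsPath S v l v') :
    IsPath (S.prod T) (v, w) (l.map fun e => (e, T.refl w)) (v', w) :=
  h.map (B := S.prod T) (fun u => (u, w)) (fun e => (e, T.refl w))
    (fun _ => by simp [prod, T.refl_src])
    (fun _ => by simp [prod, T.refl_tgt])

theorem isPath_refl_prod_left {l : List T.Motion} {w w' : T.State} (v : S.State)
    (h : IsPath T w l w') :
    IsPath (S.prod T) (v, w) (l.map fun e => (S.refl v, e)) (v, w') :=
  h.map (B := S.prod T) (fun u => (v, u)) (fun e => (S.refl v, e))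
    (fun _ => by simp [prod, S.refl_src])
    (fun _ => by simp [prod, S.refl_tgt])

theorem deadlock_of_deadlock_prod_left {v : S.State} {w : T.State}
    (h : Deadlock (S.prod T) (v, w)) : Deadlock S v := fun e he =>
  congrArg Prod.fst (h (e, T.refl w) (by simp [prod, he, T.refl_src]))

theorem deadlock_of_deadlock_prod_right {v : S.State} {w : T.State}
    (h : Deadlock (S.prod T) (v, w)) : Deadlock T w := fun e he =>
  congrArg Prod.snd (h (S.refl v, e) (by simp [prod, he, S.refl_src]))

end Aut

open Aut

/-- If the product `S×T` has a deadlock reachable from `(v₀,w₀)`, then it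
has a reachable deadlock `(v*,w*)` with `v*` a deadlock of `S` and `w*` a deadlock of `T`,
reachable by a finite behaviour which is the concatenation of a behaviour from `(v₀,w₀)`
to `(v*,w₀)` all of whose motions have reflexive `T`-component, followed by a behaviour
from `(v*,w₀)` to `(v*,w*)` all of whose motions have reflexive `S`-component. -/
theorem product_deadlock {X Y Z W : Type} {eX : X} {eY : Y} {eZ : Z} {eW : W}
    (S : Aut X Y eX eY) (T : Aut Z W eZ eW) (v0 : S.State) (w0 : T.State)
    (h : ∃ d : (S.prod T).State, Deadlock (S.prod T) d ∧ Reaches (S.prod T) (v0, w0) d) :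
    ∃ (v : S.State) (w : T.State), Deadlock S v ∧ Deadlock T w ∧
      Deadlock (S.prod T) (v, w) ∧
      ∃ (l₁ l₂ : List (S.prod T).Motion),
        IsPath (S.prod T) (v0, w0) (l₁ ++ l₂) (v, w) ∧
        IsPath (S.prod T) (v0, w0) l₁ (v, w0) ∧
        IsPath (S.prod T) (v, w0) l₂ (v, w) ∧
        (∀ m ∈ l₁, m.2 = T.refl (T.src m.2)) ∧
        (∀ m ∈ l₂, m.1 = S.refl (S.src m.1)) := by
  obtain ⟨⟨v, w⟩, hd, l, hl⟩ := h
  have h₁ := isPath_prod_refl_right w0 (isPath_prod_fst hl)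
  have h₂ := isPath_refl_prod_left v (isPath_prod_snd hl)
  refine ⟨v, w, deadlock_of_deadlock_prod_left hd, deadlock_of_deadlock_prod_right hd, hd,
    _, _, h₁.append h₂, h₁, h₂, ?_, ?_⟩
  · intro m hm
    obtain ⟨e, -, rfl⟩ := List.mem_map.1 hm
    exact congrArg T.refl (T.refl_src w0).symm
  · intro m hm
    obtain ⟨e, -, rfl⟩ := List.mem_map.1 hm
    exact congrArg S.refl (S.refl_src v).symm
end

section
/- Let S : X → Y and T : Y → Z be automata with boundary. Let v be a state of S that is not a deadlock and such that S ignores the boundary Y in state v, and let w be any state of T. If there is a finite behaviour of the binding S·T from (v,w) ending at a deadlock state (v*,w*) of S·T, then there is a finite behaviour of S·T from (v,w) ending at (v*,w*) whose first non-reflexive motion has non-reflexive S-component and reflexive T-component. -/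
/-
Since `S` ignores `Y` in `v`, every motion `e` of `S` out of `v` can be taken in `S·T` alongside
a reflexive motion of `T`; hence no state `(v, w')` is a deadlock of `S·T`, so a behaviour to a
deadlock must contain a non-reflexive motion of `S`. Until the first one `S` sits still at
`v` and only `T` moves, with trivial label on `Y`; the first `S`-move can therefore be commuted
to the front, and the `T`-moves performed afterwards alongside reflexive motions of `S`.
-/

namespace Aut

variable {X Y Z : Type} {eX : X} {eY : Y} {eZ : Z} {S : Aut X Y eX eY} {T : Aut Y Z eY eZ}

def bindLeft (T : Aut Y Z eY eZ) (e : S.Motion) (w : T.State) (he : S.labR e = eY) :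
    (S.bind T).Motion :=
  ⟨(e, T.refl w), by rw [he, T.labL_refl]⟩

def bindRight (S : Aut X Y eX eY) (u : S.State) (f : T.Motion) (hf : T.labL f = eY) :
    (S.bind T).Motion :=
  ⟨(S.refl u, f), by rw [S.labR_refl, hf]⟩

theorem bindLeft_snd_eq_refl {e : S.Motion} {w : T.State} (he : S.labR e = eY) :
    (bindLeft T e w he).val.2 = T.refl (T.src (bindLeft T e w he).val.2) := by
  simp [bindLeft, T.refl_src]

theorem ne_refl_of_fst_ne_refl {m : (S.bind T).Motion}
    (h : m.val.1 ≠ S.refl (S.src m.val.1)) : m ≠ (S.bind T).refl ((S.bind T).src m) :=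
  fun heq => h (congrArg (fun m => m.val.1) heq)

theorem not_deadlock_bind {v : S.State} (hv : ¬ Deadlock S v)
    (hignore : ∀ e, S.src e = v → S.labR e = eY) (w : T.State) :
    ¬ Deadlock (S.bind T) (v, w) := by
  intro hdead
  refine hv fun e he => ?_
  have hsrc : (S.bind T).src (bindLeft T e w (hignore e he)) = (v, w) := by
    simp [bind, bindLeft, he, T.refl_src]
  exact congrArg (fun m => m.val.1) (hdead _ hsrc)

theorem isPath_bindLeft_bindRight {v : S.State} {w : T.State} {x : (S.bind T).State}
    {e : S.Motion} {f : T.Motion} (he : S.labR e = eY) (hf : T.labL f = eY)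
    (hes : S.src e = v) (hfs : T.src f = w) {rest : List (S.bind T).Motion}
    (hrest : IsPath (S.bind T) (S.tgt e, T.tgt f) rest x) :
    IsPath (S.bind T) (v, w) (bindLeft T e w he :: bindRight S (S.tgt e) f hf :: rest) x :=
  ⟨by simp [bind, bindLeft, hes, T.refl_src],
   by simp [bind, bindLeft, bindRight, hfs, S.refl_src, T.refl_tgt],
   by simpa [bind, bindRight, S.refl_tgt] using hrest⟩

theorem exists_isPath_fst_move {v : S.State} (hv : ¬ Deadlock S v)
    (hignore : ∀ e, S.src e = v → S.labR e = eY) {x : (S.bind T).State}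
    (hx : Deadlock (S.bind T) x) :
    ∀ {w : T.State} {l : List (S.bind T).Motion}, IsPath (S.bind T) (v, w) l x →
      ∃ (m : (S.bind T).Motion) (post : List (S.bind T).Motion),
        IsPath (S.bind T) (v, w) (m :: post) x ∧
        m.val.1 ≠ S.refl (S.src m.val.1) ∧ m.val.2 = T.refl (T.src m.val.2)
  | w, [], hl => absurd ((show (v, w) = x from hl) ▸ hx) (not_deadlock_bind hv hignore w)
  | w, p :: rest, ⟨hp, hrest⟩ => by
    have hps : S.src p.val.1 = v := congrArg Prod.fst hp
    have hpt : T.src p.val.2 = w := congrArg Prod.snd hp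
    have hf : T.labL p.val.2 = eY := p.property ▸ hignore _ hps
    by_cases hp1 : p.val.1 = S.refl v
    · have htgt : S.tgt p.val.1 = v := by rw [hp1, S.refl_tgt]
      obtain ⟨m, post, ⟨hm, hpost⟩, hm1, hm2⟩ :=
        exists_isPath_fst_move hv hignore hx (w := T.tgt p.val.2)
          (by simpa [bind, htgt] using hrest)
      have hms : S.src m.val.1 = v := congrArg Prod.fst hm
      have hmt : T.tgt m.val.2 = T.tgt p.val.2 := by
        rw [hm2, T.refl_tgt]; exact congrArg Prod.snd hm
      have hpost' : IsPath (S.bind T) (S.tgt m.val.1, T.tgt p.val.2) post x := by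
        simpa [bind, hmt] using hpost
      exact ⟨_, _, isPath_bindLeft_bindRight (hignore _ hms) hf hms hpt hpost', hm1,
        bindLeft_snd_eq_refl _⟩
    · exact ⟨_, _, isPath_bindLeft_bindRight (hignore _ hps) hf hps hpt hrest,
        fun h => hp1 (hps ▸ h), bindLeft_snd_eq_refl _⟩

end Aut

/-- If `v` is a non-deadlock state of `S` in which `S` ignores the common
boundary `Y`, and a deadlock `(v*,w*)` of the binding `S·T` is reachable from `(v,w)` by a
finite behaviour, then it is reachable from `(v,w)` by a finite behaviour whose first
non-reflexive motion has non-reflexive `S`-component and reflexive `T`-component. -/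
theorem can_move_S {X Y Z : Type} {eX : X} {eY : Y} {eZ : Z}
    (S : Aut X Y eX eY) (T : Aut Y Z eY eZ)
    (v : S.State) (w : T.State)
    (hv : ¬ Deadlock S v)
    (hignore : ∀ e, S.src e = v → S.labR e = eY)
    (vs : S.State) (ws : T.State)
    (hdead : Deadlock (S.bind T) (vs, ws))
    (hreach : ∃ l, IsPath (S.bind T) (v, w) l (vs, ws)) :
    ∃ (pre : List (S.bind T).Motion) (m : (S.bind T).Motion)
      (post : List (S.bind T).Motion),
      IsPath (S.bind T) (v, w) (pre ++ m :: post) (vs, ws) ∧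
      (∀ m' ∈ pre, m' = (S.bind T).refl ((S.bind T).src m')) ∧
      m ≠ (S.bind T).refl ((S.bind T).src m) ∧
      m.val.1 ≠ S.refl (S.src m.val.1) ∧
      m.val.2 = T.refl (T.src m.val.2) := by
  obtain ⟨l, hl⟩ := hreach
  obtain ⟨m, post, hpath, hm1, hm2⟩ := Aut.exists_isPath_fst_move hv hignore hdead hl
  exact ⟨[], m, post, hpath, by simp, Aut.ne_refl_of_fst_ne_refl hm1, hm1, hm2⟩
end

section
/- If there is a simulation f : S ⇒ T between automata with boundary S, T : X → Y with initial states, then S and T have the same set of reduced appearances: the set of reduced appearances of behaviours of S from its initial state equals the set of reduced appearances of behaviours of T from its initial state. -/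
/-- `IsReducedOf ε s t` : `t` is obtained from the (finite or infinite) sequence `s` by
deleting all occurrences of the trivial element `ε`. -/
def IsReducedOf {α : Type} (ε : α) (s t : Stream'.Seq α) : Prop :=
  ∃ φ : ℕ → ℕ, StrictMono φ ∧
    (∀ m a, t.get? m = some a ↔ (s.get? (φ m) = some a ∧ a ≠ ε)) ∧
    (∀ n a, s.get? n = some a → a ≠ ε → ∃ m, φ m = n)

/-!
A comparison preserves labels, so it maps behaviours to behaviours with the same appearance. This
gives one inclusion, and also shows that passing to the reachable subautomata `r(S)`, `r(T)` changes
no reduced appearance. Conversely, the lifting property turns each motion of a behaviour of `r(T)`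
into a run of trivially labelled motions of `r(S)` followed by one motion with the same label.
Chaining these lifts (and idling on reflexive motions once the behaviour has ended) gives a
behaviour of `r(S)` whose appearance is the original one with trivial pairs inserted, and inserting
trivial pairs does not change the reduced appearance.
-/

open Stream'

variable {X Y : Type} {eX : X} {eY : Y}

namespace Aut

def label (A : Aut X Y eX eY) (e : A.Motion) : X × Y := (A.labL e, A.labR e)

theorem label_refl (A : Aut X Y eX eY) (v : A.State) : A.label (A.refl v) = (eX, eY) := by
  simp only [label, labL_refl, labR_refl]

def reducedAppearances (A : Aut X Y eX eY) (v0 : A.State) : Set (Seq (X × Y)) :=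
  {t | ∃ s, IsBehaviour A v0 s ∧ IsReducedOf (eX, eY) (s.map A.label) t}

end Aut

section Padding

variable {α : Type}

/-- `s'` arises from `s` by inserting copies of `ε`, the entries of `s` sitting at the positions
`ψ k` of `s'`. -/
def IsPadding (ε : α) (s s' : Seq α) : Prop :=
  ∃ ψ : ℕ → ℕ, StrictMono ψ ∧ (∀ k a, s.get? k = some a → s'.get? (ψ k) = some a) ∧
    ∀ n a, s'.get? n = some a → a ≠ ε → ∃ k, ψ k = n ∧ s.get? k = some a

theorem IsReducedOf.of_isPadding {ε : α} {s s' t : Seq α} (hpad : IsPadding ε s s')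
    (hred : IsReducedOf ε s t) : IsReducedOf ε s' t := by
  obtain ⟨ψ, hψ, hget, hψsurj⟩ := hpad
  obtain ⟨φ, hφ, hiff, hφsurj⟩ := hred
  refine ⟨ψ ∘ φ, hψ.comp hφ, fun m a => (hiff m a).trans ⟨?_, ?_⟩, fun n a hn ha => ?_⟩
  · exact fun ⟨h, ha⟩ => ⟨hget _ _ h, ha⟩
  · rintro ⟨h, ha⟩
    obtain ⟨k, hk, hka⟩ := hψsurj _ _ h ha
    exact ⟨hψ.injective hk ▸ hka, ha⟩
  · obtain ⟨k, rfl, hk⟩ := hψsurj n a hn ha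
    obtain ⟨m, rfl⟩ := hφsurj k a hk ha
    exact ⟨m, rfl⟩

end Padding

section Paths

variable {A : Aut X Y eX eY}

theorem isPath_append {v w : A.State} {l₁ l₂ : List A.Motion} :
    IsPath A v (l₁ ++ l₂) w ↔ ∃ x, IsPath A v l₁ x ∧ IsPath A x l₂ w := by
  induction l₁ generalizing v with
  | nil => simp [IsPath]
  | cons e l ih => simp only [List.cons_append, IsPath, ih, and_assoc, exists_and_left]

theorem IsPath.src_of_getElem?_zero {v w : A.State} {l : List A.Motion} {e : A.Motion}
    (h : IsPath A v l w) (he : l[0]? = some e) : A.src e = v := by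
  cases l with
  | nil => simp at he
  | cons a l =>
    simp only [List.getElem?_cons_zero, Option.some.injEq] at he
    exact he ▸ h.1

theorem IsPath.src_of_getElem?_succ {v w : A.State} {l : List A.Motion} {n : ℕ}
    {e e' : A.Motion} (h : IsPath A v l w) (he : l[n]? = some e) (he' : l[n + 1]? = some e') :
    A.src e' = A.tgt e := by
  induction l generalizing v n with
  | nil => simp at he
  | cons a l ih =>
    cases n with
    | zero =>
      simp only [List.getElem?_cons_zero, Option.some.injEq] at he
      exact he ▸ h.2.src_of_getElem?_zero he'
    | succ n => exact ih h.2 he he'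

theorem Reaches.tgt {v : A.State} {e : A.Motion} (h : Reaches A v (A.src e)) :
    Reaches A v (A.tgt e) :=
  let ⟨l, hl⟩ := h
  ⟨l ++ [e], isPath_append.2 ⟨_, hl, rfl, rfl⟩⟩

theorem IsBehaviour.reaches_src {v0 : A.State} {s : Seq A.Motion} (hs : IsBehaviour A v0 s) :
    ∀ k e, s.get? k = some e → Reaches A v0 (A.src e)
  | 0, e, he => ⟨[], (hs.1 e he).symm⟩
  | k + 1, e, he => by
    obtain ⟨e₀, he₀⟩ := s.ge_stable k.le_succ he
    exact hs.2 k e₀ e he₀ he ▸ (hs.reaches_src k e₀ he₀).tgt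

end Paths

namespace Comparison

variable {A B : Aut X Y eX eY} (g : Comparison A B)

theorem label_onMotion (e : A.Motion) : B.label (g.onMotion e) = A.label e := by
  simp only [Aut.label, g.labL_eq, g.labR_eq]

theorem isBehaviour_map {v : A.State} {s : Seq A.Motion} (hs : IsBehaviour A v s) :
    IsBehaviour B (g.onState v) (s.map g.onMotion) := by
  refine ⟨fun e he => ?_, fun k e e' he he' => ?_⟩
  · obtain ⟨a, ha, rfl⟩ := Option.map_eq_some_iff.1 ((Seq.map_get? _ _ _).symm.trans he)
    rw [g.src_eq, hs.1 a ha]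
  · obtain ⟨a, ha, rfl⟩ := Option.map_eq_some_iff.1 ((Seq.map_get? _ _ _).symm.trans he)
    obtain ⟨a', ha', rfl⟩ := Option.map_eq_some_iff.1 ((Seq.map_get? _ _ _).symm.trans he')
    rw [g.src_eq, g.tgt_eq, hs.2 k a a' ha ha']

theorem map_label (s : Seq A.Motion) : (s.map g.onMotion).map B.label = s.map A.label := by
  rw [← Seq.map_comp]
  exact congrArg (Seq.map · s) (funext g.label_onMotion)

theorem reducedAppearances_subset (v : A.State) :
    A.reducedAppearances v ⊆ B.reducedAppearances (g.onState v) :=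
  fun _ ⟨s, hs, hred⟩ => ⟨s.map g.onMotion, g.isBehaviour_map hs, g.map_label s ▸ hred⟩

end Comparison

section Reach

variable (A : Aut X Y eX eY) (v0 : A.State)

def reachVal : Comparison (reach A v0) A where
  onState := Subtype.val
  onMotion := Subtype.val
  src_eq _ := rfl
  tgt_eq _ := rfl
  refl_eq _ := rfl
  labL_eq _ := rfl
  labR_eq _ := rfl

variable {A v0}

theorem IsBehaviour.exists_reach {s : Seq A.Motion} (hs : IsBehaviour A v0 s) :
    ∃ s' : Seq (reach A v0).Motion,
      IsBehaviour (reach A v0) (reachInit A v0) s' ∧ s'.map (reachVal A v0).onMotion = s := by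
  classical
  have hreach : ∀ k e, s.get? k = some e → Reaches A v0 (A.src e) ∧ Reaches A v0 (A.tgt e) :=
    fun k e he => ⟨hs.reaches_src k e he, (hs.reaches_src k e he).tgt⟩
  let inReach (e : A.Motion) : (reach A v0).Motion :=
    if h : Reaches A v0 (A.src e) ∧ Reaches A v0 (A.tgt e) then ⟨e, h⟩
    else (reach A v0).refl (reachInit A v0)
  have hval : (s.map inReach).map (reachVal A v0).onMotion = s := by
    refine Seq.ext fun k => ?_
    rw [← Seq.map_comp, Seq.map_get?]
    cases he : s.get? k with
    | none => rfl
    | some e =>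
      exact congrArg (fun m : (reach A v0).Motion => some m.val) (dif_pos (hreach k e he))
  have hget : ∀ k e, (s.map inReach).get? k = some e →
      s.get? k = some ((reachVal A v0).onMotion e) := fun k e he => by
    rw [← hval, Seq.map_get?, he, Option.map_some]
  refine ⟨s.map inReach, ⟨fun e he => ?_, fun k e e' he he' => ?_⟩, hval⟩
  · exact Subtype.ext (hs.1 _ (hget 0 e he))
  · exact Subtype.ext (hs.2 k _ _ (hget k e he) (hget (k + 1) e' he'))

theorem reducedAppearances_reach :
    (reach A v0).reducedAppearances (reachInit A v0) = A.reducedAppearances v0 := by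
  refine (reachVal A v0).reducedAppearances_subset _ |>.antisymm fun t ⟨s, hs, hred⟩ => ?_
  obtain ⟨s', hs', rfl⟩ := hs.exists_reach
  exact ⟨s', hs', (reachVal A v0).map_label s' ▸ hred⟩

end Reach

namespace Comparison

variable {A B : Aut X Y eX eY} (g : Comparison A B)

def HasLifting : Prop :=
  ∀ (v : A.State) (e : B.Motion), B.src e = g.onState v →
    ∃ (l : List A.Motion) (e' : A.Motion) (v' : A.State),
      IsPath A v (l ++ [e']) v' ∧ (∀ m ∈ l, g.onMotion m = B.refl (g.onState v)) ∧
        g.onMotion e' = e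

structure LiftedStep (A : Aut X Y eX eY) where
  pad : List A.Motion
  last : A.Motion
  tgt : A.State

def IsLiftedStep (v : A.State) (o : Option B.Motion) (c : LiftedStep A) : Prop :=
  IsPath A v (c.pad ++ [c.last]) c.tgt ∧ (∀ m ∈ c.pad, A.label m = (eX, eY)) ∧
    A.label c.last = o.elim (eX, eY) B.label ∧ g.onState c.tgt = o.elim (g.onState v) B.tgt

variable {g}

theorem HasLifting.exists_isLiftedStep (hg : g.HasLifting) {v : A.State} {o : Option B.Motion}
    (ho : ∀ e ∈ o, B.src e = g.onState v) : ∃ c, g.IsLiftedStep v o c := by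
  cases o with
  | none =>
    exact ⟨⟨[], A.refl v, v⟩, ⟨A.refl_src v, A.refl_tgt v⟩, by simp, A.label_refl v, rfl⟩
  | some e =>
    obtain ⟨l, e', v', hpath, hl, rfl⟩ := hg v e (ho e rfl)
    obtain ⟨x, -, hx⟩ := isPath_append.1 hpath
    refine ⟨⟨l, e', v'⟩, hpath, fun m hm => ?_, (g.label_onMotion e').symm, ?_⟩
    · rw [← g.label_onMotion, hl m hm, B.label_refl]
    · rw [Option.elim_some, g.tgt_eq, hx.2]

variable (g)

noncomputable def liftedStep (v : A.State) (o : Option B.Motion) : LiftedStep A :=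
  @Classical.epsilon _ ⟨⟨[], A.refl v, v⟩⟩ (g.IsLiftedStep v o)

variable (s : Seq B.Motion) (a0 : A.State)

/-- Past the end of `s` each lifted step is a single reflexive motion, so the lifted behaviour is
infinite. -/
noncomputable def liftPath : ℕ → List A.Motion × A.State
  | 0 => ([], a0)
  | k + 1 =>
    let c := g.liftedStep (liftPath k).2 (s.get? k)
    ((liftPath k).1 ++ (c.pad ++ [c.last]), c.tgt)

noncomputable def liftStepAt (k : ℕ) : LiftedStep A :=
  g.liftedStep (g.liftPath s a0 k).2 (s.get? k)

theorem liftPath_succ (k : ℕ) :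
    g.liftPath s a0 (k + 1) = ((g.liftPath s a0 k).1 ++
      ((g.liftStepAt s a0 k).pad ++ [(g.liftStepAt s a0 k).last]), (g.liftStepAt s a0 k).tgt) :=
  rfl

theorem le_length_liftPath (k : ℕ) : k ≤ (g.liftPath s a0 k).1.length := by
  induction k with
  | zero => exact le_rfl
  | succ k ih => simp only [liftPath_succ, List.length_append, List.length_singleton]; omega

theorem liftPath_prefix {k K : ℕ} (h : k ≤ K) :
    (g.liftPath s a0 k).1 <+: (g.liftPath s a0 K).1 := by
  induction K, h using Nat.le_induction with
  | base => exact List.prefix_refl _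
  | succ K _ ih => exact ih.trans (List.prefix_append _ _)

noncomputable def liftStream : Stream' A.Motion := fun n =>
  (g.liftPath s a0 (n + 1)).1[n]'(Nat.lt_of_lt_of_le n.lt_succ_self (g.le_length_liftPath s a0 _))

theorem getElem?_liftPath {K n : ℕ} (h : n < (g.liftPath s a0 K).1.length) :
    (g.liftPath s a0 K).1[n]? = some (g.liftStream s a0 n) := by
  rw [List.getElem?_eq_getElem h, liftStream,
    (g.liftPath_prefix s a0 (le_max_left K (n + 1))).getElem,
    (g.liftPath_prefix s a0 (le_max_right K (n + 1))).getElem]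

theorem getElem?_liftPath_of_lt {K n : ℕ} (h : n < K) :
    (g.liftPath s a0 K).1[n]? = some (g.liftStream s a0 n) :=
  g.getElem?_liftPath s a0 (Nat.lt_of_lt_of_le h (g.le_length_liftPath s a0 K))

noncomputable def liftPos (k : ℕ) : ℕ :=
  (g.liftPath s a0 k).1.length + (g.liftStepAt s a0 k).pad.length

theorem strictMono_liftPos : StrictMono (g.liftPos s a0) :=
  strictMono_nat_of_lt_succ fun k => by
    simp only [liftPos, liftPath_succ, List.length_append, List.length_singleton]; omega

theorem liftStream_liftPos (k : ℕ) :
    g.liftStream s a0 (g.liftPos s a0 k) = (g.liftStepAt s a0 k).last := by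
  have hlast :
      (g.liftPath s a0 (k + 1)).1[g.liftPos s a0 k]? = some (g.liftStepAt s a0 k).last := by
    rw [liftPath_succ, liftPos, ← List.append_assoc, ← List.length_append,
      List.getElem?_concat_length]
  have hlen := (List.getElem?_eq_some_iff.1 hlast).1
  exact Option.some.inj ((g.getElem?_liftPath s a0 hlen).symm.trans hlast)

variable {g s a0}

theorem HasLifting.isLiftedStep_liftStepAt (hg : g.HasLifting)
    (hs : IsBehaviour B (g.onState a0) s) (k : ℕ) :
    g.IsLiftedStep (g.liftPath s a0 k).2 (s.get? k) (g.liftStepAt s a0 k) := by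
  suffices hsrc : ∀ j, ∀ e ∈ s.get? j, B.src e = g.onState (g.liftPath s a0 j).2 from
    Classical.epsilon_spec (hg.exists_isLiftedStep (hsrc k))
  intro j
  induction j with
  | zero => exact fun e he => hs.1 e he
  | succ j ih =>
    intro e' he'
    obtain ⟨e, he⟩ := s.ge_stable j.le_succ he'
    have hstep : g.IsLiftedStep (g.liftPath s a0 j).2 (s.get? j) (g.liftStepAt s a0 j) :=
      Classical.epsilon_spec (hg.exists_isLiftedStep ih)
    have htgt := hstep.2.2.2
    rw [he] at htgt
    exact (hs.2 j e e' he he').trans htgt.symm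

theorem HasLifting.isPath_liftPath (hg : g.HasLifting) (hs : IsBehaviour B (g.onState a0) s)
    (k : ℕ) : IsPath A a0 (g.liftPath s a0 k).1 (g.liftPath s a0 k).2 := by
  induction k with
  | zero => rfl
  | succ k ih => exact isPath_append.2 ⟨_, ih, (hg.isLiftedStep_liftStepAt hs k).1⟩

theorem HasLifting.exists_liftPos_of_label_ne (hg : g.HasLifting)
    (hs : IsBehaviour B (g.onState a0) s) {n : ℕ} {m : A.Motion} :
    ∀ k, (g.liftPath s a0 k).1[n]? = some m → A.label m ≠ (eX, eY) →
      ∃ j e, g.liftPos s a0 j = n ∧ s.get? j = some e ∧ A.label m = B.label e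
  | 0, h, _ => by simp [liftPath] at h
  | k + 1, h, hm => by
    obtain ⟨-, hpad, hlast, -⟩ := hg.isLiftedStep_liftStepAt hs k
    rw [liftPath_succ, List.getElem?_append] at h
    split_ifs at h with hn
    · exact hg.exists_liftPos_of_label_ne hs k h hm
    rw [List.getElem?_append] at h
    split_ifs at h with hn'
    · exact absurd (hpad m (List.mem_of_getElem? h)) hm
    obtain ⟨hi, rfl⟩ := List.getElem?_eq_some_iff.1 h
    rw [List.getElem_singleton] at hm ⊢
    cases hk : s.get? k with
    | none => rw [hk] at hlast; exact absurd hlast hm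
    | some e =>
      rw [hk] at hlast
      refine ⟨k, e, ?_, hk, hlast⟩
      simp only [List.length_singleton] at hi
      simp only [liftPos]
      omega

theorem HasLifting.isBehaviour_liftStream (hg : g.HasLifting)
    (hs : IsBehaviour B (g.onState a0) s) :
    IsBehaviour A a0 (Seq.ofStream (g.liftStream s a0)) := by
  refine ⟨fun e he => ?_, fun k e e' he he' => ?_⟩
  · exact Option.some.inj he ▸
      (hg.isPath_liftPath hs 1).src_of_getElem?_zero (g.getElem?_liftPath_of_lt s a0 one_pos)
  · rw [← Option.some.inj he, ← Option.some.inj he']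
    exact (hg.isPath_liftPath hs (k + 2)).src_of_getElem?_succ
      (g.getElem?_liftPath_of_lt s a0 (by omega)) (g.getElem?_liftPath_of_lt s a0 (by omega))

theorem HasLifting.isPadding_liftStream (hg : g.HasLifting)
    (hs : IsBehaviour B (g.onState a0) s) :
    IsPadding (eX, eY) (s.map B.label) ((Seq.ofStream (g.liftStream s a0)).map A.label) := by
  refine ⟨g.liftPos s a0, g.strictMono_liftPos s a0, fun k a ha => ?_, fun n a hn ha => ?_⟩
  · rw [Seq.map_get?] at ha
    obtain ⟨e, he, rfl⟩ := Option.map_eq_some_iff.1 ha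
    have hlast := (hg.isLiftedStep_liftStepAt hs k).2.2.1
    rw [he] at hlast
    rw [Seq.map_get?]
    exact congrArg some ((congrArg A.label (g.liftStream_liftPos s a0 k)).trans hlast)
  · obtain rfl := Option.some.inj hn
    obtain ⟨j, e, hj, he, hlab⟩ := hg.exists_liftPos_of_label_ne hs (n + 1)
      (g.getElem?_liftPath_of_lt s a0 n.lt_succ_self) ha
    refine ⟨j, hj, ?_⟩
    rw [Seq.map_get?, he]
    exact congrArg some hlab.symm

theorem HasLifting.reducedAppearances_subset (hg : g.HasLifting) (a0 : A.State) :
    B.reducedAppearances (g.onState a0) ⊆ A.reducedAppearances a0 :=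
  fun _ ⟨_, hs, hred⟩ =>
    ⟨_, hg.isBehaviour_liftStream hs, hred.of_isPadding (hg.isPadding_liftStream hs)⟩

end Comparison

theorem Simulation.reducedAppearances_eq {S T : Aut X Y eX eY} {v0 : S.State} {w0 : T.State}
    (f : Simulation S T v0 w0) : S.reducedAppearances v0 = T.reducedAppearances w0 := by
  have hinit : f.comp.onState (reachInit S v0) = reachInit T w0 := Subtype.ext f.init
  have hlift : f.comp.HasLifting := f.lift
  rw [← reducedAppearances_reach (A := S), ← reducedAppearances_reach (A := T), ← hinit]
  exact (f.comp.reducedAppearances_subset _).antisymm (hlift.reducedAppearances_subset _)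

/-- If there is a simulation `f : S ⇒ T` then `S` and `T` have the same set
of reduced appearances of behaviours from their initial states. -/
theorem simulation_same_reduced_appearances {X Y : Type} {eX : X} {eY : Y}
    (S T : Aut X Y eX eY) (v0 : S.State) (w0 : T.State)
    (f : Simulation S T v0 w0) :
    ∀ t : Stream'.Seq (X × Y),
      (∃ s : Stream'.Seq S.Motion, IsBehaviour S v0 s ∧
        IsReducedOf (eX, eY) (s.map fun e => (S.labL e, S.labR e)) t) ↔
      (∃ s : Stream'.Seq T.Motion, IsBehaviour T w0 s ∧
        IsReducedOf (eX, eY) (s.map fun e => (T.labL e, T.labR e)) t) :=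
  Set.ext_iff.1 f.reducedAppearances_eq
end
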